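/- arXiv:2101.08529 — 2 statements merged into one kernel-verified Lean document; each statement's English description precedes it below -/
import Mathlib

section
/- Fix k ≥ 1, σ > 0, a spectral density h_σ = σ²·h₁ with h₁ > 0 a.e., and parameters μ_j ∈ (-π/j, π/j], κ_j ≥ 0 (j = 1,...,k). Define the exponentially tilted density g_σ(θ) = h_σ(θ) · exp{ Σ_{j=1}^k κ_j cos(j(θ - μ_j)) } / G₀, where G₀ = ∫_{-π}^{π} exp{ Σ_{j=1}^k κ_j cos(j(θ - μ_j)) } h₁(θ) dθ. Then for any spectral density q_σ with total mass σ² satisfying ∫_{-π}^{π} e^{irθ} q_σ(θ) dθ = ∫_{-π}^{π} e^{irθ} g_σ(θ) dθ for r = 1,...,k, it holds that I(q_σ|h_σ) ≥ I(g_σ|h_σ), with equality iff q_σ = g_σ almost everywhere. -/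
open MeasureTheory Real Set InformationTheory

/-!
For `f` of the same mass as `g`, `I(f|h) = I(f|g) + ∫ log (g / h) f`, and `I(f|g) ≥ 0` with
equality iff `f = g` a.e. (Gibbs' inequality, from `klFun ≥ 0`). For the tilt `g = h e^φ / G₀`
we have `log (g / h) = φ - log G₀`, so the cross term sees `f` only through its mass and `∫ φ f`;
for `φ = ∑ κ_j cos (j (θ - μ_j))` the latter is a combination of the first `k` Fourier
coefficients of `f`. Both agree with those of `g`, so the cross term is `I(g|h)` and
`I(f|h) = I(f|g) + I(g|h)`.
-/

noncomputable def klInformation {α : Type*} [MeasurableSpace α] (ν : Measure α)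
    (f g : α → ℝ) : ℝ :=
  ∫ x, log (f x / g x) * f x ∂ν

section Gibbs

variable {α : Type*} [MeasurableSpace α] {ν : Measure α} {f g h : α → ℝ}

lemma log_div_mul_sub_eq_mul_klFun (a : ℝ) {b : ℝ} (hb : b ≠ 0) :
    log (a / b) * a - (a - b) = b * klFun (a / b) := by
  rw [klFun]; field_simp; ring

theorem klInformation_nonneg_and_eq_zero_iff (hf0 : 0 ≤ᵐ[ν] f) (hg : ∀ᵐ x ∂ν, 0 < g x)
    (hf_int : Integrable f ν) (hg_int : Integrable g ν) (hmass : ∫ x, f x ∂ν = ∫ x, g x ∂ν)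
    (hI : Integrable (fun x => log (f x / g x) * f x) ν) :
    0 ≤ klInformation ν f g ∧ (klInformation ν f g = 0 ↔ f =ᵐ[ν] g) := by
  have hkl : (fun x => log (f x / g x) * f x - (f x - g x)) =ᵐ[ν]
      fun x => g x * klFun (f x / g x) := by
    filter_upwards [hg] with x hx using log_div_mul_sub_eq_mul_klFun _ hx.ne'
  have hkl_int : Integrable (fun x => g x * klFun (f x / g x)) ν :=
    (hI.sub (hf_int.sub hg_int)).congr hkl
  have hkl_nonneg : 0 ≤ᵐ[ν] fun x => g x * klFun (f x / g x) := by
    filter_upwards [hf0, hg] with x hfx hgx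
    exact mul_nonneg hgx.le (klFun_nonneg (div_nonneg hfx hgx.le))
  have hrepr : klInformation ν f g = ∫ x, g x * klFun (f x / g x) ∂ν := by
    calc klInformation ν f g = klInformation ν f g - ∫ x, (f x - g x) ∂ν := by
          rw [integral_sub hf_int hg_int, hmass, sub_self, sub_zero]
      _ = ∫ x, g x * klFun (f x / g x) ∂ν := by
          rw [klInformation, ← integral_sub (g := fun x => f x - g x) hI (hf_int.sub hg_int),
            integral_congr_ae hkl]
  refine ⟨hrepr ▸ integral_nonneg_of_ae hkl_nonneg, ?_⟩
  rw [hrepr, integral_eq_zero_iff_of_nonneg_ae hkl_nonneg hkl_int]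
  refine Filter.eventually_congr ?_
  filter_upwards [hf0, hg] with x hfx hgx
  simp [hgx.ne', klFun_eq_zero_iff (div_nonneg hfx hgx.le), div_eq_one_iff_eq hgx.ne']

lemma log_div_mul_eq_add {a b c : ℝ} (ha : 0 ≤ a) (hb : 0 < b) (hc : 0 < c) :
    log (a / c) * a = log (a / b) * a + log (b / c) * a := by
  rcases ha.eq_or_lt with rfl | ha
  · simp
  rw [← add_mul, ← log_mul (div_pos ha hb).ne' (div_pos hb hc).ne', div_mul_div_cancel₀ hb.ne']

theorem klInformation_le_of_integral_log_div_mul_eq (hf0 : 0 ≤ᵐ[ν] f)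
    (hg : ∀ᵐ x ∂ν, 0 < g x) (hh : ∀ᵐ x ∂ν, 0 < h x)
    (hf_int : Integrable f ν) (hg_int : Integrable g ν) (hmass : ∫ x, f x ∂ν = ∫ x, g x ∂ν)
    (hI : Integrable (fun x => log (f x / h x) * f x) ν)
    (hJ : Integrable (fun x => log (g x / h x) * f x) ν)
    (hcross : ∫ x, log (g x / h x) * f x ∂ν = klInformation ν g h) :
    klInformation ν g h ≤ klInformation ν f h ∧
      (klInformation ν f h = klInformation ν g h ↔ f =ᵐ[ν] g) := by
  have hsplit : (fun x => log (f x / h x) * f x) =ᵐ[ν]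
      fun x => log (f x / g x) * f x + log (g x / h x) * f x := by
    filter_upwards [hf0, hg, hh] with x hfx hgx hhx using log_div_mul_eq_add hfx hgx hhx
  have hD : Integrable (fun x => log (f x / g x) * f x) ν :=
    (hI.sub hJ).congr (by filter_upwards [hsplit] with x hx; simp [hx])
  have hpyth : klInformation ν f h = klInformation ν f g + klInformation ν g h := by
    rw [← hcross, klInformation, integral_congr_ae hsplit, integral_add hD hJ, klInformation]
  obtain ⟨hnonneg, hzero⟩ :=
    klInformation_nonneg_and_eq_zero_iff hf0 hg hf_int hg_int hmass hD
  rw [hpyth, ← hzero]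
  exact ⟨by linarith, add_eq_right⟩

end Gibbs

section Tilt

variable {α : Type*} [MeasurableSpace α] {ν : Measure α} {f g h φ : α → ℝ} {c C Z : ℝ}

lemma integrable_exp_mul (hφ : AEStronglyMeasurable φ ν) (hφC : ∀ᵐ x ∂ν, |φ x| ≤ C)
    (hh_int : Integrable h ν) : Integrable (fun x => exp (φ x) * h x) ν :=
  hh_int.bdd_mul (continuous_exp.comp_aestronglyMeasurable hφ) <| by
    filter_upwards [hφC] with x hx
    rw [norm_of_nonneg (exp_pos _).le]
    exact exp_le_exp.2 (abs_le.1 hx).2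

lemma integral_exp_mul_pos [NeZero ν] (hh : ∀ᵐ x ∂ν, 0 < h x)
    (hint : Integrable (fun x => exp (φ x) * h x) ν) : 0 < ∫ x, exp (φ x) * h x ∂ν := by
  have hpos : ∀ᵐ x ∂ν, 0 < exp (φ x) * h x := by
    filter_upwards [hh] with x hx using mul_pos (exp_pos _) hx
  have hnull : ν (Function.support fun x => exp (φ x) * h x)ᶜ = 0 :=
    measure_mono_null (fun x hx (hlt : 0 < exp (φ x) * h x) => hx hlt.ne') (ae_iff.1 hpos)
  rw [integral_pos_iff_support_of_nonneg_ae (hpos.mono fun _ hx => hx.le) hint,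
    measure_congr (ae_eq_univ.2 hnull)]
  exact Measure.measure_univ_pos.2 (NeZero.ne ν)

lemma integrable_of_tilt (hφ : AEStronglyMeasurable φ ν) (hφC : ∀ᵐ x ∂ν, |φ x| ≤ C)
    (hh_int : Integrable h ν) (hg : ∀ x, g x = c * h x * exp (φ x) / Z) : Integrable g ν := by
  have hg' : g = fun x => c / Z * (exp (φ x) * h x) := by
    funext x; rw [hg]; ring
  exact hg' ▸ (integrable_exp_mul hφ hφC hh_int).const_mul _

lemma integrable_mul_and_integral_mul_of_ae_eq_sub {ψ p : α → ℝ} {a : ℝ}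
    (hψ : ∀ᵐ x ∂ν, ψ x = φ x - a) (hφ : AEStronglyMeasurable φ ν) (hφC : ∀ᵐ x ∂ν, |φ x| ≤ C)
    (hp : Integrable p ν) :
    Integrable (fun x => ψ x * p x) ν ∧
      ∫ x, ψ x * p x ∂ν = ∫ x, φ x * p x ∂ν - a * ∫ x, p x ∂ν := by
  have hφp : Integrable (fun x => φ x * p x) ν :=
    hp.bdd_mul hφ (by simpa only [norm_eq_abs] using hφC)
  have heq : (fun x => ψ x * p x) =ᵐ[ν] fun x => φ x * p x - a * p x := by
    filter_upwards [hψ] with x hx; rw [hx]; ring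
  refine ⟨(hφp.sub (hp.const_mul _)).congr heq.symm, ?_⟩
  rw [integral_congr_ae heq, integral_sub hφp (hp.const_mul _), integral_const_mul]

theorem klInformation_tilt_le [NeZero ν] (hc : 0 < c) (hh : ∀ᵐ x ∂ν, 0 < h x)
    (hh_int : Integrable h ν) (hφ : AEStronglyMeasurable φ ν) (hφC : ∀ᵐ x ∂ν, |φ x| ≤ C)
    (hZ : Z = ∫ x, exp (φ x) * h x ∂ν) (hg : ∀ x, g x = c * h x * exp (φ x) / Z)
    (hf0 : 0 ≤ᵐ[ν] f) (hf_mass : ∫ x, f x ∂ν = c)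
    (hφfg : ∫ x, φ x * f x ∂ν = ∫ x, φ x * g x ∂ν)
    (hI : Integrable (fun x => log (f x / (c * h x)) * f x) ν) :
    klInformation ν g (fun x => c * h x) ≤ klInformation ν f (fun x => c * h x) ∧
      (klInformation ν f (fun x => c * h x) = klInformation ν g (fun x => c * h x) ↔
        f =ᵐ[ν] g) := by
  have hZpos : 0 < Z := hZ ▸ integral_exp_mul_pos hh (integrable_exp_mul hφ hφC hh_int)
  have hg_int : Integrable g ν := integrable_of_tilt hφ hφC hh_int hg
  have hg_mass : ∫ x, g x ∂ν = c := by
    calc ∫ x, g x ∂ν = ∫ x, c / Z * (exp (φ x) * h x) ∂ν := by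
          congr with x; rw [hg]; ring
      _ = c := by rw [integral_const_mul, ← hZ]; field_simp
  have hg_pos : ∀ᵐ x ∂ν, 0 < g x := by
    filter_upwards [hh] with x hx
    rw [hg]; positivity
  have hch : ∀ᵐ x ∂ν, 0 < c * h x := by filter_upwards [hh] with x hx using mul_pos hc hx
  have hlog : ∀ᵐ x ∂ν, log (g x / (c * h x)) = φ x - log Z := by
    filter_upwards [hch] with x hx
    rw [hg, mul_div_assoc, mul_div_cancel_left₀ _ hx.ne', log_div (exp_pos _).ne' hZpos.ne',
      log_exp]
  have hf_int : Integrable f ν := .of_integral_ne_zero (hf_mass ▸ hc.ne')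
  obtain ⟨hJ, hJf⟩ := integrable_mul_and_integral_mul_of_ae_eq_sub hlog hφ hφC hf_int
  obtain ⟨-, hJg⟩ := integrable_mul_and_integral_mul_of_ae_eq_sub hlog hφ hφC hg_int
  refine klInformation_le_of_integral_log_div_mul_eq hf0 hg_pos hch hf_int hg_int
    (hf_mass.trans hg_mass.symm) hI hJ ?_
  rw [klInformation, hJf, hJg, hφfg, hf_mass, hg_mass]

end Tilt

section Fourier

variable {ν : Measure ℝ} {p q g : ℝ → ℝ}

lemma integral_cos_mul_eq_re (hp : Integrable p ν) (r μ : ℝ) :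
    ∫ θ, cos (r * (θ - μ)) * p θ ∂ν =
      (Complex.exp (-(Complex.I * r * μ)) * ∫ θ, Complex.exp (Complex.I * r * θ) * p θ ∂ν).re := by
  have hint : Integrable (fun θ : ℝ => Complex.exp (Complex.I * r * θ) * p θ) ν :=
    hp.ofReal.bdd_mul (c := 1) (by fun_prop) (ae_of_all _ fun θ => by
      rw [Complex.norm_exp]; simp)
  rw [← integral_const_mul, ← RCLike.re_to_complex, ← integral_re (hint.const_mul _)]
  congr with θ
  rw [← mul_assoc, ← Complex.exp_add, show -(Complex.I * r * μ) + Complex.I * r * θ =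
    ((r * (θ - μ) : ℝ) : ℂ) * Complex.I by push_cast; ring]
  simp only [RCLike.re_to_complex, Complex.re_mul_ofReal, Complex.exp_ofReal_mul_I_re]

noncomputable def cosSum (s : Finset ℕ) (κ μ : ℕ → ℝ) (θ : ℝ) : ℝ :=
  ∑ j ∈ s, κ j * cos (j * (θ - μ j))

variable {s : Finset ℕ} {κ μ : ℕ → ℝ}

lemma continuous_cosSum : Continuous (cosSum s κ μ) := by
  unfold cosSum; fun_prop

lemma abs_mul_cos_le (a x : ℝ) : |a * cos x| ≤ |a| := by
  rw [abs_mul]; exact mul_le_of_le_one_right (abs_nonneg _) (abs_cos_le_one _)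

lemma abs_cosSum_le (θ : ℝ) : |cosSum s κ μ θ| ≤ ∑ j ∈ s, |κ j| :=
  (Finset.abs_sum_le_sum_abs _ _).trans <| Finset.sum_le_sum fun _ _ => abs_mul_cos_le _ _

lemma integral_cosSum_mul_eq (hq : Integrable q ν) (hg : Integrable g ν)
    (hfourier : ∀ r ∈ s, ∫ θ, Complex.exp (Complex.I * r * θ) * (q θ : ℂ) ∂ν =
      ∫ θ, Complex.exp (Complex.I * r * θ) * (g θ : ℂ) ∂ν) :
    ∫ θ, cosSum s κ μ θ * q θ ∂ν = ∫ θ, cosSum s κ μ θ * g θ ∂ν := by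
  have hexpand : ∀ p : ℝ → ℝ, Integrable p ν → ∫ θ, cosSum s κ μ θ * p θ ∂ν =
      ∑ j ∈ s, κ j * (Complex.exp (-(Complex.I * j * μ j)) *
        ∫ θ, Complex.exp (Complex.I * j * θ) * p θ ∂ν).re := by
    intro p hp
    have hterm : ∀ j, Integrable (fun θ => κ j * cos (j * (θ - μ j)) * p θ) ν := fun j =>
      hp.bdd_mul (by fun_prop) (ae_of_all _ fun _ => abs_mul_cos_le (κ j) _)
    simp_rw [cosSum, Finset.sum_mul]
    rw [integral_finsetSum _ fun j _ => hterm j]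
    refine Finset.sum_congr rfl fun j _ => ?_
    rw [← Complex.ofReal_natCast, ← integral_cos_mul_eq_re hp, ← integral_const_mul]
    simp only [mul_assoc]
  rw [hexpand q hq, hexpand g hg]
  exact Finset.sum_congr rfl fun j hj => by rw [hfourier j hj]

end Fourier

theorem kl_closest_spectral_density_general (k : ℕ) (σ : ℝ) (hσ : 0 < σ)
    (h₁ : ℝ → ℝ) (μpar κ : ℕ → ℝ)
    (hhpos : ∀ᵐ θ ∂(volume.restrict (Ioc (-π) π)), 0 < h₁ θ)
    (hh1 : ∫ θ in Ioc (-π) π, h₁ θ = 1)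
    (G₀ : ℝ)
    (hG₀ : G₀ = ∫ θ in Ioc (-π) π,
      Real.exp (∑ j ∈ Finset.Icc 1 k, κ j * Real.cos (j * (θ - μpar j))) * h₁ θ)
    (g : ℝ → ℝ)
    (hgdef : ∀ θ, g θ =
      σ ^ 2 * h₁ θ * Real.exp (∑ j ∈ Finset.Icc 1 k, κ j * Real.cos (j * (θ - μpar j))) / G₀)
    (q : ℝ → ℝ) (hq0 : ∀ θ, 0 ≤ q θ)
    (hqmass : ∫ θ in Ioc (-π) π, q θ = σ ^ 2)
    (hconstraints : ∀ r ∈ Finset.Icc 1 k,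
      (∫ θ in Ioc (-π) π, Complex.exp (Complex.I * r * θ) * (q θ : ℝ)) =
        ∫ θ in Ioc (-π) π, Complex.exp (Complex.I * r * θ) * (g θ : ℝ))
    (hIq : IntegrableOn (fun θ => Real.log (q θ / (σ ^ 2 * h₁ θ)) * q θ) (Ioc (-π) π)) :
    (∫ θ in Ioc (-π) π, Real.log (g θ / (σ ^ 2 * h₁ θ)) * g θ) ≤
      (∫ θ in Ioc (-π) π, Real.log (q θ / (σ ^ 2 * h₁ θ)) * q θ) ∧
    ((∫ θ in Ioc (-π) π, Real.log (q θ / (σ ^ 2 * h₁ θ)) * q θ) =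
        (∫ θ in Ioc (-π) π, Real.log (g θ / (σ ^ 2 * h₁ θ)) * g θ) ↔
      q =ᵐ[volume.restrict (Ioc (-π) π)] g) := by
  set ν := volume.restrict (Ioc (-π) π)
  have : NeZero ν := ⟨fun h0 => by simp [h0] at hh1⟩
  have hh_int : Integrable h₁ ν := .of_integral_ne_zero (by simp [hh1])
  have hq_int : Integrable q ν := .of_integral_ne_zero (by rw [hqmass]; positivity)
  have hφ : AEStronglyMeasurable (cosSum (Finset.Icc 1 k) κ μpar) ν :=
    continuous_cosSum.aestronglyMeasurable
  have hφC : ∀ᵐ θ ∂ν, |cosSum (Finset.Icc 1 k) κ μpar θ| ≤ ∑ j ∈ Finset.Icc 1 k, |κ j| :=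
    ae_of_all _ abs_cosSum_le
  have hg_int : Integrable g ν := integrable_of_tilt hφ hφC hh_int hgdef
  exact klInformation_tilt_le (pow_pos hσ 2) hhpos hh_int hφ hφC hG₀ hgdef (ae_of_all _ hq0)
    hqmass (integral_cosSum_mul_eq hq_int hg_int hconstraints) hIq

/-- The exponential tilt of a spectral density `h_σ = σ² h₁` matching the first `k`
autocovariance constraints minimizes the Kullback-Leibler information w.r.t. `h_σ`
among all spectral densities of total mass `σ²` satisfying the same constraints,
with uniqueness up to a.e. equality. -/
theorem kl_closest_spectral_density (k : ℕ) (hk : 1 ≤ k) (σ : ℝ) (hσ : 0 < σ)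
    (h₁ : ℝ → ℝ) (μpar κ : ℕ → ℝ)
    (hh : Measurable h₁) (hh0 : ∀ θ, 0 ≤ h₁ θ)
    (hhpos : ∀ᵐ θ ∂(volume.restrict (Ioc (-π) π)), 0 < h₁ θ)
    (hh1 : ∫ θ in Ioc (-π) π, h₁ θ = 1)
    (hμ : ∀ j ∈ Finset.Icc 1 k, μpar j ∈ Ioc (-(π / j)) (π / j))
    (hκ : ∀ j ∈ Finset.Icc 1 k, 0 ≤ κ j)
    (G₀ : ℝ)
    (hG₀ : G₀ = ∫ θ in Ioc (-π) π,
      Real.exp (∑ j ∈ Finset.Icc 1 k, κ j * Real.cos (j * (θ - μpar j))) * h₁ θ)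
    (g : ℝ → ℝ)
    (hgdef : ∀ θ, g θ =
      σ ^ 2 * h₁ θ * Real.exp (∑ j ∈ Finset.Icc 1 k, κ j * Real.cos (j * (θ - μpar j))) / G₀)
    (q : ℝ → ℝ) (hq : Measurable q) (hq0 : ∀ θ, 0 ≤ q θ)
    (hqmass : ∫ θ in Ioc (-π) π, q θ = σ ^ 2)
    (hqsupp : ∀ θ ∈ Ioc (-π) π, h₁ θ = 0 → q θ = 0)
    (hconstraints : ∀ r ∈ Finset.Icc 1 k,
      (∫ θ in Ioc (-π) π, Complex.exp (Complex.I * r * θ) * (q θ : ℝ)) =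
        ∫ θ in Ioc (-π) π, Complex.exp (Complex.I * r * θ) * (g θ : ℝ))
    (hIq : IntegrableOn (fun θ => Real.log (q θ / (σ ^ 2 * h₁ θ)) * q θ) (Ioc (-π) π))
    (hIg : IntegrableOn (fun θ => Real.log (g θ / (σ ^ 2 * h₁ θ)) * g θ) (Ioc (-π) π)) :
    (∫ θ in Ioc (-π) π, Real.log (g θ / (σ ^ 2 * h₁ θ)) * g θ) ≤
      (∫ θ in Ioc (-π) π, Real.log (q θ / (σ ^ 2 * h₁ θ)) * q θ) ∧
    ((∫ θ in Ioc (-π) π, Real.log (q θ / (σ ^ 2 * h₁ θ)) * q θ) =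
        (∫ θ in Ioc (-π) π, Real.log (g θ / (σ ^ 2 * h₁ θ)) * g θ) ↔
      q =ᵐ[volume.restrict (Ioc (-π) π)] g) :=
  kl_closest_spectral_density_general k σ hσ h₁ μpar κ hhpos hh1 G₀ hG₀ g hgdef q hq0 hqmass
    hconstraints hIq
end

section
/- For a spectral density g_σ with total mass σ² satisfying ∫_{-π}^{π} cos(rθ) g_σ(θ) dθ = ν_r and ∫_{-π}^{π} sin(rθ) g_σ(θ) dθ = ξ_r for r = 1,...,k, the spectral entropy satisfies S(g_σ) ≤ σ² log G₀(δ₁,...,δ_{k-1},κ₁,...,κ_k) − Σ_{r=1}^k κ_r (ν_r cos(r μ_r) + ξ_r sin(r μ_r)), where the parameters μ_r, κ_r are chosen so that the GvM_k spectral density with these parameters satisfies the same moment constraints; equality holds iff g_σ equals that GvM_k spectral density a.e. -/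
/-!
Gibbs' inequality: for densities `g ≥ 0` and `f > 0` of equal mass,
`∫ g log (f / c) ≤ ∫ g log (g / c)`, the gap being `∫ f · klFun (g / f) ≥ 0`, which vanishes
iff `g = f` a.e. For the GvM_k density `f`, `log (f / (σ² / 2π))` is the trigonometric
polynomial `∑ κ_j cos (j (θ - μ_j))` minus `log G₀`, so the cross term `∫ g log (f / c)` only
depends on the mass and the first `k` trigonometric moments of `g`. That `f` has mass `σ²` comes
from the periodicity of the exponent: shifting `θ` by `μ_1` turns its integral into `2π G₀`.
-/

open MeasureTheory Real Set InformationTheory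

lemma log_div_mul_sub_log_div_mul {a b c : ℝ} (ha : 0 ≤ a) (hb : 0 < b) (hc : 0 < c) :
    log (a / c) * a - log (b / c) * a = b * klFun (a / b) + (a - b) := by
  rcases ha.eq_or_lt with rfl | ha
  · simp [klFun]
  · rw [klFun, log_div ha.ne' hc.ne', log_div hb.ne' hc.ne', log_div ha.ne' hb.ne']
    field_simp
    ring

section Gibbs

variable {α : Type*} [MeasurableSpace α] {μ : Measure α} {f g : α → ℝ} {c : ℝ}

lemma integral_log_div_mul_sub_eq_integral_klFun (hc : 0 < c) (hg : ∀ x, 0 ≤ g x)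
    (hf : ∀ x, 0 < f x) (hgi : Integrable g μ) (hfi : Integrable f μ)
    (hmass : ∫ x, g x ∂μ = ∫ x, f x ∂μ)
    (hgl : Integrable (fun x ↦ log (g x / c) * g x) μ)
    (hfl : Integrable (fun x ↦ log (f x / c) * g x) μ) :
    Integrable (fun x ↦ f x * klFun (g x / f x)) μ ∧
      ∫ x, log (g x / c) * g x ∂μ - ∫ x, log (f x / c) * g x ∂μ =
        ∫ x, f x * klFun (g x / f x) ∂μ := by
  have hpt : (fun x ↦ f x * klFun (g x / f x)) =
      fun x ↦ (log (g x / c) * g x - log (f x / c) * g x) - (g x - f x) := by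
    ext x
    rw [log_div_mul_sub_log_div_mul (hg x) (hf x) hc]
    ring
  refine ⟨hpt ▸ (hgl.sub hfl).sub (hgi.sub hfi), ?_⟩
  rw [hpt, integral_sub, integral_sub hgl hfl, integral_sub hgi hfi, hmass, sub_self, sub_zero]
  exacts [hgl.sub hfl, hgi.sub hfi]

lemma integral_log_div_mul_le (hc : 0 < c) (hg : ∀ x, 0 ≤ g x)
    (hf : ∀ x, 0 < f x) (hgi : Integrable g μ) (hfi : Integrable f μ)
    (hmass : ∫ x, g x ∂μ = ∫ x, f x ∂μ)
    (hgl : Integrable (fun x ↦ log (g x / c) * g x) μ)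
    (hfl : Integrable (fun x ↦ log (f x / c) * g x) μ) :
    ∫ x, log (f x / c) * g x ∂μ ≤ ∫ x, log (g x / c) * g x ∂μ := by
  have hgap := (integral_log_div_mul_sub_eq_integral_klFun hc hg hf hgi hfi hmass hgl hfl).2
  have : 0 ≤ ∫ x, f x * klFun (g x / f x) ∂μ :=
    integral_nonneg fun x ↦ mul_nonneg (hf x).le (klFun_nonneg (div_nonneg (hg x) (hf x).le))
  linarith

lemma integral_log_div_mul_eq_iff (hc : 0 < c) (hg : ∀ x, 0 ≤ g x)
    (hf : ∀ x, 0 < f x) (hgi : Integrable g μ) (hfi : Integrable f μ)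
    (hmass : ∫ x, g x ∂μ = ∫ x, f x ∂μ)
    (hgl : Integrable (fun x ↦ log (g x / c) * g x) μ)
    (hfl : Integrable (fun x ↦ log (f x / c) * g x) μ) :
    ∫ x, log (f x / c) * g x ∂μ = ∫ x, log (g x / c) * g x ∂μ ↔ g =ᵐ[μ] f := by
  obtain ⟨hint, hgap⟩ := integral_log_div_mul_sub_eq_integral_klFun hc hg hf hgi hfi hmass hgl hfl
  have hnonneg : 0 ≤ fun x ↦ f x * klFun (g x / f x) :=
    fun x ↦ mul_nonneg (hf x).le (klFun_nonneg (div_nonneg (hg x) (hf x).le))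
  have hzero : ∀ x, f x * klFun (g x / f x) = 0 ↔ g x = f x := fun x ↦ by
    rw [mul_eq_zero, klFun_eq_zero_iff (div_nonneg (hg x) (hf x).le),
      div_eq_one_iff_eq (hf x).ne', or_iff_right (hf x).ne']
  rw [eq_comm, ← sub_eq_zero, hgap, integral_eq_zero_iff_of_nonneg hnonneg hint]
  exact Filter.eventually_congr (Filter.Eventually.of_forall fun x ↦ hzero x)

end Gibbs

lemma cos_mul_add_two_pi_div_mul_fract {t : ℝ} (ht : t ≠ 0) (θ x : ℝ) :
    cos (t * (θ + 2 * π / t * Int.fract (x / (2 * π / t)))) = cos (t * (θ + x)) := by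
  have hmul : t * (θ + 2 * π / t * Int.fract (x / (2 * π / t))) =
      t * (θ + x) - ⌊x / (2 * π / t)⌋ * (2 * π) := by
    rw [Int.fract]
    field_simp
    ring
  rw [hmul, cos_sub_int_mul_two_pi]

/-- The exponent of the GvM_k spectral density. -/
noncomputable def gvmExponent (k : ℕ) (κ μ : ℕ → ℝ) (θ : ℝ) : ℝ :=
  ∑ j ∈ Finset.Icc 1 k, κ j * cos (j * (θ - μ j))

section GvM

variable {k : ℕ} {κ μ : ℕ → ℝ}

@[fun_prop]
lemma continuous_gvmExponent : Continuous (gvmExponent k κ μ) := by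
  unfold gvmExponent
  fun_prop

lemma periodic_gvmExponent : Function.Periodic (gvmExponent k κ μ) (2 * π) := fun θ ↦ by
  refine Finset.sum_congr rfl fun j _ ↦ ?_
  rw [show (j : ℝ) * (θ + 2 * π - μ j) = j * (θ - μ j) + (j : ℤ) * (2 * π) by push_cast; ring,
    cos_add_int_mul_two_pi]

lemma abs_gvmExponent_le (θ : ℝ) : |gvmExponent k κ μ θ| ≤ ∑ j ∈ Finset.Icc 1 k, |κ j| := by
  refine (Finset.abs_sum_le_sum_abs _ _).trans (Finset.sum_le_sum fun j _ ↦ ?_)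
  rw [abs_mul]
  exact mul_le_of_le_one_right (abs_nonneg _) (abs_cos_le_one _)

/-- Shifting by `μ 1` brings the exponent to the form used in the normalizing constant `G₀`,
with the phase differences `δ j` reduced modulo `2π / j`. -/
lemma gvmExponent_add_eq {δ : ℕ → ℝ} (hk : 1 ≤ k)
    (hδ : ∀ j ∈ Finset.Icc 2 k, δ j = (2 * π / j) * Int.fract ((μ 1 - μ j) / (2 * π / j)))
    (θ : ℝ) :
    gvmExponent k κ μ (θ + μ 1) =
      κ 1 * cos θ + ∑ j ∈ Finset.Icc 2 k, κ j * cos (j * (θ + δ j)) := by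
  have hIcc : Finset.Icc 1 k = insert 1 (Finset.Icc 2 k) := by
    ext j
    simp only [Finset.mem_Icc, Finset.mem_insert]
    omega
  rw [gvmExponent, hIcc, Finset.sum_insert (by simp)]
  congr 1
  · simp
  · refine Finset.sum_congr rfl fun j hj ↦ ?_
    have hj0 : (j : ℝ) ≠ 0 := by
      have := (Finset.mem_Icc.mp hj).1
      positivity
    rw [hδ j hj, cos_mul_add_two_pi_div_mul_fract hj0]
    ring_nf

lemma setIntegral_exp_gvmExponent {δ : ℕ → ℝ} (hk : 1 ≤ k)
    (hδ : ∀ j ∈ Finset.Icc 2 k, δ j = (2 * π / j) * Int.fract ((μ 1 - μ j) / (2 * π / j))) :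
    ∫ θ in Ioc (-π) π, exp (gvmExponent k κ μ θ) =
      ∫ θ in Ioc 0 (2 * π), exp (κ 1 * cos θ + ∑ j ∈ Finset.Icc 2 k, κ j * cos (j * (θ + δ j))) := by
  have hper : Function.Periodic (fun θ ↦ exp (gvmExponent k κ μ θ)) (2 * π) :=
    fun θ ↦ by simp only [periodic_gvmExponent θ]
  rw [← intervalIntegral.integral_of_le (by linarith [pi_pos]),
    ← intervalIntegral.integral_of_le (by linarith [pi_pos])]
  simp_rw [← gvmExponent_add_eq (κ := κ) hk hδ]
  rw [intervalIntegral.integral_comp_add_right (fun θ ↦ exp (gvmExponent k κ μ θ)), zero_add,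
    add_comm, ← hper.intervalIntegral_add_eq (-π) (μ 1)]
  ring_nf

lemma MeasureTheory.Integrable.gvmExponent_mul {ρ : Measure ℝ} {g : ℝ → ℝ} (hg : Integrable g ρ) :
    Integrable (fun θ ↦ gvmExponent k κ μ θ * g θ) ρ :=
  hg.bdd_mul continuous_gvmExponent.aestronglyMeasurable
    (Filter.Eventually.of_forall abs_gvmExponent_le)

lemma integral_gvmExponent_mul {ρ : Measure ℝ} {g : ℝ → ℝ} {ν ξ : ℕ → ℝ} (hg : Integrable g ρ)
    (hmoments : ∀ r ∈ Finset.Icc 1 k,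
      ∫ θ, cos (r * θ) * g θ ∂ρ = ν r ∧ ∫ θ, sin (r * θ) * g θ ∂ρ = ξ r) :
    ∫ θ, gvmExponent k κ μ θ * g θ ∂ρ =
      ∑ r ∈ Finset.Icc 1 k, κ r * (ν r * cos (r * μ r) + ξ r * sin (r * μ r)) := by
  have hbdd {φ : ℝ → ℝ} (hφ : Continuous φ) (hb : ∀ θ, |φ θ| ≤ 1) :
      Integrable (fun θ ↦ φ θ * g θ) ρ :=
    hg.bdd_mul hφ.aestronglyMeasurable (Filter.Eventually.of_forall hb)
  have hterm (r : ℕ) (θ : ℝ) : κ r * cos (r * (θ - μ r)) * g θ =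
      κ r * cos (r * μ r) * (cos (r * θ) * g θ) + κ r * sin (r * μ r) * (sin (r * θ) * g θ) := by
    rw [mul_sub, cos_sub]
    ring
  simp_rw [gvmExponent, Finset.sum_mul, hterm]
  rw [integral_finsetSum]
  · refine Finset.sum_congr rfl fun r hr ↦ ?_
    rw [integral_add, integral_const_mul, integral_const_mul, (hmoments r hr).1, (hmoments r hr).2]
    · ring
    · exact (hbdd (by fun_prop) fun θ ↦ abs_cos_le_one _).const_mul _
    · exact (hbdd (by fun_prop) fun θ ↦ abs_sin_le_one _).const_mul _
  · exact fun r _ ↦ ((hbdd (by fun_prop) fun θ ↦ abs_cos_le_one _).const_mul _).add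
      ((hbdd (by fun_prop) fun θ ↦ abs_sin_le_one _).const_mul _)

lemma setIntegral_exp_gvmExponent_pos : 0 < ∫ θ in Ioc (-π) π, exp (gvmExponent k κ μ θ) := by
  rw [← intervalIntegral.integral_of_le (by linarith [pi_pos])]
  exact intervalIntegral.intervalIntegral_pos_of_pos
    (Continuous.intervalIntegrable (by fun_prop) _ _) (fun θ ↦ exp_pos _) (by linarith [pi_pos])

end GvM

/-- The GvM_k spectral density of total mass `m` and normalizing constant `G`. -/
noncomputable def gvmDensity (k : ℕ) (κ μ : ℕ → ℝ) (m G θ : ℝ) : ℝ :=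
  m / (2 * π * G) * exp (gvmExponent k κ μ θ)

section GvMDensity

variable {k : ℕ} {κ μ : ℕ → ℝ} {m G : ℝ}

lemma gvmDensity_pos (hm : 0 < m) (hG : 0 < G) (θ : ℝ) : 0 < gvmDensity k κ μ m G θ := by
  unfold gvmDensity
  positivity

lemma continuous_gvmDensity : Continuous (gvmDensity k κ μ m G) := by
  unfold gvmDensity
  fun_prop

lemma setIntegral_gvmDensity (hG : G = (2 * π)⁻¹ * ∫ θ in Ioc (-π) π, exp (gvmExponent k κ μ θ)) :
    ∫ θ in Ioc (-π) π, gvmDensity k κ μ m G θ = m := by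
  simp only [gvmDensity]
  rw [integral_const_mul, hG]
  field_simp [setIntegral_exp_gvmExponent_pos.ne']

lemma log_gvmDensity_div (hm : m ≠ 0) (hG : 0 < G) (θ : ℝ) :
    log (gvmDensity k κ μ m G θ / (m / (2 * π))) = gvmExponent k κ μ θ - log G := by
  rw [gvmDensity, show m / (2 * π * G) * exp (gvmExponent k κ μ θ) / (m / (2 * π)) =
    exp (gvmExponent k κ μ θ) / G by field_simp, log_div (exp_ne_zero _) hG.ne', log_exp]

lemma integral_log_gvmDensity_div_mul {ρ : Measure ℝ} {g : ℝ → ℝ} {ν ξ : ℕ → ℝ} (hm : m ≠ 0)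
    (hG : 0 < G) (hg : Integrable g ρ) (hgmass : ∫ θ, g θ ∂ρ = m)
    (hmoments : ∀ r ∈ Finset.Icc 1 k,
      ∫ θ, cos (r * θ) * g θ ∂ρ = ν r ∧ ∫ θ, sin (r * θ) * g θ ∂ρ = ξ r) :
    Integrable (fun θ ↦ log (gvmDensity k κ μ m G θ / (m / (2 * π))) * g θ) ρ ∧
      ∫ θ, log (gvmDensity k κ μ m G θ / (m / (2 * π))) * g θ ∂ρ =
        ∑ r ∈ Finset.Icc 1 k, κ r * (ν r * cos (r * μ r) + ξ r * sin (r * μ r)) - m * log G := by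
  have hpt (θ : ℝ) : log (gvmDensity k κ μ m G θ / (m / (2 * π))) * g θ =
      gvmExponent k κ μ θ * g θ - log G * g θ := by
    rw [log_gvmDensity_div hm hG, sub_mul]
  simp_rw [hpt]
  refine ⟨hg.gvmExponent_mul.sub (hg.const_mul _), ?_⟩
  rw [integral_sub hg.gvmExponent_mul (hg.const_mul _), integral_const_mul, hgmass,
    integral_gvmExponent_mul hg hmoments, mul_comm (log G)]

end GvMDensity

theorem gvm_entropy_upper_bound_general (k : ℕ) (hk : 1 ≤ k) (σ : ℝ) (hσ : 0 < σ)
    (μpar κ ν ξ : ℕ → ℝ) (δ : ℕ → ℝ)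
    (hδ : ∀ j ∈ Finset.Icc 2 k,
      δ j = (2 * π / j) * Int.fract ((μpar 1 - μpar j) / (2 * π / j)))
    (G₀ : ℝ)
    (hG₀ : G₀ = (2 * π)⁻¹ * ∫ θ in Ioc 0 (2 * π),
      Real.exp (κ 1 * Real.cos θ +
        ∑ j ∈ Finset.Icc 2 k, κ j * Real.cos (j * (θ + δ j))))
    (f : ℝ → ℝ)
    (hfdef : ∀ θ, f θ =
      σ ^ 2 * Real.exp (∑ j ∈ Finset.Icc 1 k, κ j * Real.cos (j * (θ - μpar j))) /
        (2 * π * G₀))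
    (g : ℝ → ℝ) (hg0 : ∀ θ, 0 ≤ g θ)
    (hgmass : ∫ θ in Ioc (-π) π, g θ = σ ^ 2)
    (hgconstraints : ∀ r ∈ Finset.Icc 1 k,
      (∫ θ in Ioc (-π) π, Real.cos (r * θ) * g θ) = ν r ∧
      (∫ θ in Ioc (-π) π, Real.sin (r * θ) * g θ) = ξ r)
    (hIg : IntegrableOn (fun θ => Real.log (g θ / (σ ^ 2 / (2 * π))) * g θ) (Ioc (-π) π)) :
    (-∫ θ in Ioc (-π) π, Real.log (g θ / (σ ^ 2 / (2 * π))) * g θ) ≤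
      σ ^ 2 * Real.log G₀ -
        ∑ r ∈ Finset.Icc 1 k, κ r * (ν r * Real.cos (r * μpar r) + ξ r * Real.sin (r * μpar r)) ∧
    ((-∫ θ in Ioc (-π) π, Real.log (g θ / (σ ^ 2 / (2 * π))) * g θ) =
        σ ^ 2 * Real.log G₀ -
          ∑ r ∈ Finset.Icc 1 k, κ r * (ν r * Real.cos (r * μpar r) + ξ r * Real.sin (r * μpar r)) ↔
      g =ᵐ[volume.restrict (Ioc (-π) π)] f) := by
  rw [← setIntegral_exp_gvmExponent hk hδ] at hG₀
  have hG₀pos : 0 < G₀ := hG₀ ▸ mul_pos (by positivity) setIntegral_exp_gvmExponent_pos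
  have hσ2 : 0 < σ ^ 2 := by positivity
  obtain rfl : f = gvmDensity k κ μpar (σ ^ 2) G₀ := funext fun θ ↦ by
    rw [hfdef, gvmDensity, gvmExponent]
    ring
  have hgi : Integrable g (volume.restrict (Ioc (-π) π)) :=
    Integrable.of_integral_ne_zero (hgmass ▸ hσ2.ne')
  have hmass : ∫ θ in Ioc (-π) π, g θ = ∫ θ in Ioc (-π) π, gvmDensity k κ μpar (σ ^ 2) G₀ θ :=
    hgmass.trans (setIntegral_gvmDensity hG₀).symm
  obtain ⟨hfl, hcross⟩ := integral_log_gvmDensity_div_mul hσ2.ne' hG₀pos hgi hgmass hgconstraints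
  have hc : 0 < σ ^ 2 / (2 * π) := by positivity
  have hfpos := gvmDensity_pos (k := k) (κ := κ) (μ := μpar) hσ2 hG₀pos
  have hfi : IntegrableOn (gvmDensity k κ μpar (σ ^ 2) G₀) (Ioc (-π) π) :=
    continuous_gvmDensity.integrableOn_Ioc
  constructor
  · linarith [integral_log_div_mul_le hc hg0 hfpos hgi hfi hmass hIg hfl]
  · rw [← integral_log_div_mul_eq_iff hc hg0 hfpos hgi hfi hmass hIg hfl]
    constructor <;> intro h <;> linarith

/-- Upper bound on the spectral Shannon entropy of a spectral density satisfying
the autocovariance constraints `ν_r, ξ_r`, `r = 1,…,k`, in terms of the normalizing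
constant `G₀` of the GvM_k spectral density with the same constraints; equality
holds iff the density is the GvM_k spectral density a.e. -/
theorem gvm_entropy_upper_bound (k : ℕ) (hk : 1 ≤ k) (σ : ℝ) (hσ : 0 < σ)
    (μpar κ ν ξ : ℕ → ℝ) (δ : ℕ → ℝ)
    (hμ : ∀ j ∈ Finset.Icc 1 k, μpar j ∈ Ioc (-(π / j)) (π / j))
    (hκ : ∀ j ∈ Finset.Icc 1 k, 0 ≤ κ j)
    (hδ : ∀ j ∈ Finset.Icc 2 k,
      δ j = (2 * π / j) * Int.fract ((μpar 1 - μpar j) / (2 * π / j)))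
    (G₀ : ℝ)
    (hG₀ : G₀ = (2 * π)⁻¹ * ∫ θ in Ioc 0 (2 * π),
      Real.exp (κ 1 * Real.cos θ +
        ∑ j ∈ Finset.Icc 2 k, κ j * Real.cos (j * (θ + δ j))))
    (f : ℝ → ℝ)
    (hfdef : ∀ θ, f θ =
      σ ^ 2 * Real.exp (∑ j ∈ Finset.Icc 1 k, κ j * Real.cos (j * (θ - μpar j))) /
        (2 * π * G₀))
    (hfconstraints : ∀ r ∈ Finset.Icc 1 k,
      (∫ θ in Ioc (-π) π, Real.cos (r * θ) * f θ) = ν r ∧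
      (∫ θ in Ioc (-π) π, Real.sin (r * θ) * f θ) = ξ r)
    (g : ℝ → ℝ) (hg : Measurable g) (hg0 : ∀ θ, 0 ≤ g θ)
    (hgmass : ∫ θ in Ioc (-π) π, g θ = σ ^ 2)
    (hgconstraints : ∀ r ∈ Finset.Icc 1 k,
      (∫ θ in Ioc (-π) π, Real.cos (r * θ) * g θ) = ν r ∧
      (∫ θ in Ioc (-π) π, Real.sin (r * θ) * g θ) = ξ r)
    (hIg : IntegrableOn (fun θ => Real.log (g θ / (σ ^ 2 / (2 * π))) * g θ) (Ioc (-π) π)) :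
    (-∫ θ in Ioc (-π) π, Real.log (g θ / (σ ^ 2 / (2 * π))) * g θ) ≤
      σ ^ 2 * Real.log G₀ -
        ∑ r ∈ Finset.Icc 1 k, κ r * (ν r * Real.cos (r * μpar r) + ξ r * Real.sin (r * μpar r)) ∧
    ((-∫ θ in Ioc (-π) π, Real.log (g θ / (σ ^ 2 / (2 * π))) * g θ) =
        σ ^ 2 * Real.log G₀ -
          ∑ r ∈ Finset.Icc 1 k, κ r * (ν r * Real.cos (r * μpar r) + ξ r * Real.sin (r * μpar r)) ↔
      g =ᵐ[volume.restrict (Ioc (-π) π)] f) :=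
  gvm_entropy_upper_bound_general k hk σ hσ μpar κ ν ξ δ hδ G₀ hG₀ f hfdef g hg0 hgmass
    hgconstraints hIg
end
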